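/- arXiv:0712.1414 — 2 statements merged into one kernel-verified Lean document; each statement's English description precedes it below -/
import Mathlib

section
/- For almost every θ ∈ [0,1], the following holds: for every ε > 0 there exists C such that |∑_{n=2}^{N} Λ(n) e^{2πiθn}| ≤ C · N^{1/2} (log N)^{5/2+ε} for all N ≥ 2. -/
open MeasureTheory Finset

open Complex intervalIntegral

noncomputable def ee (θ : ℝ) (n : ℕ) : ℂ := Complex.exp (2 * Real.pi * Complex.I * θ * n)

lemma integral_exp_int (d : ℤ) (hd : d ≠ 0) :
    ∫ θ in (0:ℝ)..1, Complex.exp (2 * Real.pi * Complex.I * d * θ) = 0 := by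
  have hc : (2 * Real.pi * Complex.I * d) ≠ 0 := by
    simp [Real.pi_ne_zero, Complex.I_ne_zero, hd, Complex.ofReal_ne_zero]
  have := integral_exp_mul_complex (a := 0) (b := 1) hc
  simp only [Complex.ofReal_one, Complex.ofReal_zero, mul_one, mul_zero, Complex.exp_zero] at this
  rw [show (fun θ : ℝ => Complex.exp (2 * Real.pi * Complex.I * d * θ)) = fun θ : ℝ => Complex.exp ((2 * Real.pi * Complex.I * d) * θ) from rfl] at this
  rw [this]
  have h1 : Complex.exp (2 * Real.pi * Complex.I * d) = 1 := by
    have := Complex.exp_int_mul_two_pi_mul_I d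
    rw [← this]; ring_nf
  rw [h1]; simp

lemma ee_mul_conj (θ : ℝ) (n m : ℕ) :
    ee θ n * (starRingEnd ℂ) (ee θ m) = Complex.exp (2 * Real.pi * Complex.I * ((n:ℤ) - m) * θ) := by
  unfold ee
  rw [← Complex.exp_conj, ← Complex.exp_add]
  congr 1
  simp only [map_mul, Complex.conj_I, Complex.conj_ofReal, map_ofNat, map_natCast]
  push_cast
  ring

lemma integral_ee_mul_conj (n m : ℕ) :
    ∫ θ in Set.Icc (0:ℝ) 1, ee θ n * (starRingEnd ℂ) (ee θ m) =
      if n = m then 1 else 0 := by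
  simp only [ee_mul_conj]
  rw [MeasureTheory.integral_Icc_eq_integral_Ioc,
    ← intervalIntegral.integral_of_le (by norm_num : (0:ℝ) ≤ 1)]
  by_cases h : n = m
  · subst h
    simp
  · rw [if_neg h]
    have hd : ((n:ℤ) - m) ≠ 0 := sub_ne_zero.2 (by exact_mod_cast h)
    have h2 := integral_exp_int _ hd
    push_cast at h2 ⊢
    exact h2

lemma continuous_ee (n : ℕ) : Continuous fun θ : ℝ => ee θ n := by
  unfold ee; fun_prop

lemma continuous_term (n m : ℕ) :
    Continuous fun θ : ℝ => ee θ n * (starRingEnd ℂ) (ee θ m) := by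
  exact (continuous_ee n).mul (continuous_conj.comp (continuous_ee m))

lemma integral_l2 (f : ℕ → ℝ) (s : Finset ℕ) :
    ∫ θ in Set.Icc (0:ℝ) 1, ‖∑ n ∈ s, ((f n : ℝ) : ℂ) * ee θ n‖^2 = ∑ n ∈ s, (f n)^2 := by
  set g : ℝ → ℂ := fun θ => ∑ n ∈ s, ((f n : ℝ) : ℂ) * ee θ n with hg
  have hprod : ∀ θ, g θ * (starRingEnd ℂ) (g θ) =
      ∑ n ∈ s, ∑ m ∈ s, ((f n * f m : ℝ) : ℂ) * (ee θ n * (starRingEnd ℂ) (ee θ m)) := by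
    intro θ
    rw [hg]
    simp only [map_sum, Finset.sum_mul_sum, map_mul, Complex.conj_ofReal]
    refine Finset.sum_congr rfl fun n _ => Finset.sum_congr rfl fun m _ => ?_
    push_cast; ring
  have hint : ∀ n ∈ s, ∀ m ∈ s, Integrable
      (fun θ => ((f n * f m : ℝ) : ℂ) * (ee θ n * (starRingEnd ℂ) (ee θ m)))
      (volume.restrict (Set.Icc (0:ℝ) 1)) :=
    fun n _ m _ => (continuous_const.mul (continuous_term n m)).integrableOn_Icc
  have hgint : Integrable (fun θ => g θ * (starRingEnd ℂ) (g θ))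
      (volume.restrict (Set.Icc (0:ℝ) 1)) := by
    rw [funext hprod]
    exact integrable_finset_sum _ fun n hn => integrable_finset_sum _ fun m hm => hint n hn m hm
  have key : ∫ θ in Set.Icc (0:ℝ) 1, g θ * (starRingEnd ℂ) (g θ) = ∑ n ∈ s, ((f n : ℝ) : ℂ)^2 := by
    rw [funext hprod, integral_finset_sum _ (fun n hn => integrable_finset_sum _ fun m hm => hint n hn m hm)]
    refine Finset.sum_congr rfl fun n hn => ?_
    rw [integral_finset_sum _ (fun m hm => hint n hn m hm)]
    have : ∀ m ∈ s, (∫ θ in Set.Icc (0:ℝ) 1,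
        ((f n * f m : ℝ) : ℂ) * (ee θ n * (starRingEnd ℂ) (ee θ m)))
        = ((f n * f m : ℝ) : ℂ) * (if n = m then 1 else 0) := by
      intro m _
      rw [MeasureTheory.integral_const_mul, integral_ee_mul_conj]
    rw [Finset.sum_congr rfl this]
    simp only [mul_ite, mul_one, mul_zero]
    rw [Finset.sum_ite_eq s n (fun m => ((f n * f m : ℝ) : ℂ)), if_pos hn]
    push_cast; ring
  have hnorm : ∀ θ, ‖g θ‖^2 = (g θ * (starRingEnd ℂ) (g θ)).re := by
    intro θ
    have h1 : (g θ * (starRingEnd ℂ) (g θ)).re = Complex.normSq (g θ) := by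
      rw [Complex.mul_conj]; simp
    rw [h1, ← Complex.sq_norm]
  calc ∫ θ in Set.Icc (0:ℝ) 1, ‖g θ‖^2
      = ∫ θ in Set.Icc (0:ℝ) 1, (g θ * (starRingEnd ℂ) (g θ)).re := by
        exact integral_congr_ae (Filter.Eventually.of_forall fun θ => hnorm θ)
    _ = (∫ θ in Set.Icc (0:ℝ) 1, g θ * (starRingEnd ℂ) (g θ)).re := integral_re hgint
    _ = ∑ n ∈ s, (f n)^2 := by
        rw [key]
        simp [← Complex.ofReal_pow]

noncomputable def SS (θ : ℝ) (N : ℕ) : ℂ :=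
  ∑ n ∈ Finset.Ioc 0 N, ((ArithmeticFunction.vonMangoldt n : ℝ) : ℂ) * ee θ n
noncomputable def DD (θ : ℝ) (j m : ℕ) : ℂ :=
  ∑ n ∈ Finset.Ioc (m * 2^j) ((m+1) * 2^j), ((ArithmeticFunction.vonMangoldt n : ℝ) : ℂ) * ee θ n
noncomputable def QQ (k : ℕ) (θ : ℝ) : ℝ :=
  ((k:ℝ)+1) * ∑ j ∈ Finset.range (k+1), ∑ m ∈ Finset.range (2^(k-j)), ‖DD θ j m‖^2

lemma chain (k N : ℕ) (hN : N ≤ 2^k) (θ : ℝ) : ‖SS θ N‖^2 ≤ QQ k θ := by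
  set P : ℕ → ℂ := fun j => SS θ (N / 2^j * 2^j) with hP
  have h0 : P 0 = SS θ N := by simp [hP]
  have hend : P (k+1) = 0 := by
    have h1 : N / 2^(k+1) = 0 :=
      Nat.div_eq_of_lt (lt_of_le_of_lt hN (Nat.pow_lt_pow_right one_lt_two k.lt_succ_self))
    simp [hP, h1, SS]
  have htel : SS θ N = ∑ j ∈ Finset.range (k+1), (P j - P (j+1)) := by
    rw [Finset.sum_range_sub' P (k+1), h0, hend, sub_zero]
  have hdiff : ∀ j ∈ Finset.range (k+1),
      ‖P j - P (j+1)‖^2 ≤ ∑ m ∈ Finset.range (2^(k-j)), ‖DD θ j m‖^2 := by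
    intro j hj
    have hjk : j ≤ k := Nat.lt_succ_iff.mp (Finset.mem_range.mp hj)
    have hq : N / 2^(j+1) = N / 2^j / 2 := by
      rw [pow_succ, Nat.div_div_eq_div_mul]
    have hle : N / 2^(j+1) * 2^(j+1) ≤ N / 2^j * 2^j := by
      calc N / 2^(j+1) * 2^(j+1) = (N / 2^j / 2 * 2) * 2^j := by rw [hq, pow_succ]; ring
        _ ≤ (N / 2^j) * 2^j := Nat.mul_le_mul_right _ (Nat.div_mul_le_self _ 2)
    have hPdiff : P j - P (j+1) = ∑ n ∈ Finset.Ioc (N / 2^(j+1) * 2^(j+1)) (N / 2^j * 2^j),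
        ((ArithmeticFunction.vonMangoldt n : ℝ) : ℂ) * ee θ n := by
      have h2 := Finset.sum_Ioc_consecutive
        (f := fun n => ((ArithmeticFunction.vonMangoldt n : ℝ) : ℂ) * ee θ n)
        (Nat.zero_le (N / 2^(j+1) * 2^(j+1))) hle
      simp only [hP, SS]
      rw [← h2]; ring
    have hqle : N / 2^j ≤ 2^(k-j) := by
      calc N / 2^j ≤ 2^k / 2^j := Nat.div_le_div_right hN
        _ = 2^(k-j) := Nat.pow_div hjk (by norm_num)
    rcases Nat.even_or_odd (N / 2^j) with he | ho
    · have hlu : N / 2^(j+1) * 2^(j+1) = N / 2^j * 2^j := by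
        obtain ⟨t, ht⟩ := he
        have h4 : (t+t)/2 = t := by omega
        rw [hq, ht, h4, pow_succ]
        ring
      rw [hPdiff, hlu]
      simp only [Finset.Ioc_self, Finset.sum_empty, norm_zero]
      have h5 : (0:ℝ) ≤ ∑ m ∈ Finset.range (2^(k-j)), ‖DD θ j m‖^2 :=
        Finset.sum_nonneg fun m _ => sq_nonneg _
      simpa using h5
    · obtain ⟨t, ht⟩ := ho
      have hm : N / 2^(j+1) = t := by rw [hq, ht]; omega
      have hblock : P j - P (j+1) = DD θ j (2*t) := by
        have e1 : N / 2 ^ (j+1) * 2^(j+1) = 2*t * 2^j := by rw [hm, pow_succ]; ring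
        have e2 : N / 2^j * 2^j = (2*t+1) * 2^j := by rw [ht]
        rw [hPdiff, e1, e2]
        rfl
      have hmem : 2*t ∈ Finset.range (2^(k-j)) := by
        rw [Finset.mem_range]
        omega
      rw [hblock]
      exact Finset.single_le_sum (f := fun m => ‖DD θ j m‖^2)
        (fun m _ => sq_nonneg _) hmem
  calc ‖SS θ N‖^2 = ‖∑ j ∈ Finset.range (k+1), (P j - P (j+1))‖^2 := by rw [← htel]
    _ ≤ (∑ j ∈ Finset.range (k+1), ‖P j - P (j+1)‖)^2 :=
        pow_le_pow_left₀ (norm_nonneg _) (norm_sum_le _ _) 2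
    _ ≤ ((k:ℝ)+1) * ∑ j ∈ Finset.range (k+1), ‖P j - P (j+1)‖^2 := by
        have h3 := sq_sum_le_card_mul_sum_sq
          (s := Finset.range (k+1)) (f := fun j => ‖P j - P (j+1)‖)
        simp only [Finset.card_range, Nat.cast_add, Nat.cast_one] at h3
        exact h3
    _ ≤ ((k:ℝ)+1) * ∑ j ∈ Finset.range (k+1), ∑ m ∈ Finset.range (2^(k-j)), ‖DD θ j m‖^2 := by
        refine mul_le_mul_of_nonneg_left (Finset.sum_le_sum hdiff) (by positivity)
    _ = QQ k θ := rfl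

lemma continuous_DD_sq (j m : ℕ) : Continuous fun θ : ℝ => ‖DD θ j m‖^2 := by
  unfold DD
  exact ((continuous_finset_sum _ fun n _ => continuous_const.mul (continuous_ee n)).norm).pow 2

lemma integrable_QQ (k : ℕ) : Integrable (QQ k) (volume.restrict (Set.Icc (0:ℝ) 1)) := by
  unfold QQ
  refine (Integrable.const_mul ?_ _)
  exact integrable_finset_sum _ fun j _ => integrable_finset_sum _ fun m _ =>
    (continuous_DD_sq j m).integrableOn_Icc

lemma QQ_nonneg (k : ℕ) (θ : ℝ) : 0 ≤ QQ k θ := by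
  unfold QQ
  have : (0:ℝ) ≤ ∑ j ∈ Finset.range (k+1), ∑ m ∈ Finset.range (2^(k-j)), ‖DD θ j m‖^2 :=
    Finset.sum_nonneg fun j _ => Finset.sum_nonneg fun m _ => sq_nonneg _
  positivity

lemma blocks_sum (h : ℕ → ℝ) (c M : ℕ) :
    ∑ m ∈ Finset.range M, ∑ n ∈ Finset.Ioc (m*c) ((m+1)*c), h n
      = ∑ n ∈ Finset.Ioc 0 (M*c), h n := by
  induction M with
  | zero => simp
  | succ M ih =>
      rw [Finset.sum_range_succ, ih,
        Finset.sum_Ioc_consecutive h (Nat.zero_le (M*c)) (Nat.mul_le_mul_right c (Nat.le_succ M))]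

lemma vm_sq_le (k n : ℕ) (hn : n ∈ Finset.Ioc 0 (2^k)) :
    (ArithmeticFunction.vonMangoldt n : ℝ)^2 ≤ ((k:ℝ)+1)^2 := by
  obtain ⟨h0, h1⟩ := Finset.mem_Ioc.mp hn
  have hlog : (ArithmeticFunction.vonMangoldt n : ℝ) ≤ (k:ℝ)+1 := by
    calc (ArithmeticFunction.vonMangoldt n : ℝ) ≤ Real.log n :=
          ArithmeticFunction.vonMangoldt_le_log
      _ ≤ Real.log (2^k) := Real.log_le_log (by exact_mod_cast h0) (by exact_mod_cast h1)
      _ = (k:ℝ) * Real.log 2 := by push_cast; rw [Real.log_pow]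
      _ ≤ (k:ℝ) * 1 := by
          refine mul_le_mul_of_nonneg_left ?_ (Nat.cast_nonneg k)
          linarith [Real.log_le_sub_one_of_pos (by norm_num : (0:ℝ) < 2)]
      _ ≤ (k:ℝ)+1 := by linarith
  exact pow_le_pow_left₀ ArithmeticFunction.vonMangoldt_nonneg hlog 2

lemma integral_QQ_le (k : ℕ) :
    ∫ θ in Set.Icc (0:ℝ) 1, QQ k θ ≤ (2:ℝ)^k * ((k:ℝ)+1)^4 := by
  unfold QQ
  rw [MeasureTheory.integral_const_mul]
  rw [integral_finset_sum _ (fun j _ => integrable_finset_sum _ fun m _ =>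
    (continuous_DD_sq j m).integrableOn_Icc)]
  have hj : ∀ j ∈ Finset.range (k+1),
      (∫ θ in Set.Icc (0:ℝ) 1, ∑ m ∈ Finset.range (2^(k-j)), ‖DD θ j m‖^2)
        ≤ (2:ℝ)^k * ((k:ℝ)+1)^2 := by
    intro j hj
    have hjk : j ≤ k := Nat.lt_succ_iff.mp (Finset.mem_range.mp hj)
    rw [integral_finset_sum _ (fun m _ => (continuous_DD_sq j m).integrableOn_Icc)]
    have hDD : ∀ m, ∫ θ in Set.Icc (0:ℝ) 1, ‖DD θ j m‖^2
        = ∑ n ∈ Finset.Ioc (m*2^j) ((m+1)*2^j), (ArithmeticFunction.vonMangoldt n : ℝ)^2 :=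
      fun m => integral_l2 _ _
    rw [Finset.sum_congr rfl fun m _ => hDD m, blocks_sum]
    have hpow : 2^(k-j) * 2^j = 2^k := by
      rw [← pow_add, Nat.sub_add_cancel hjk]
    rw [hpow]
    calc ∑ n ∈ Finset.Ioc 0 (2^k), (ArithmeticFunction.vonMangoldt n : ℝ)^2
        ≤ ∑ n ∈ Finset.Ioc 0 (2^k), ((k:ℝ)+1)^2 := Finset.sum_le_sum (vm_sq_le k)
      _ = (2^k : ℕ) * ((k:ℝ)+1)^2 := by rw [Finset.sum_const, Nat.card_Ioc]; simp
      _ = (2:ℝ)^k * ((k:ℝ)+1)^2 := by push_cast; ring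
  calc ((k:ℝ)+1) * ∑ j ∈ Finset.range (k+1),
        (∫ θ in Set.Icc (0:ℝ) 1, ∑ m ∈ Finset.range (2^(k-j)), ‖DD θ j m‖^2)
      ≤ ((k:ℝ)+1) * ∑ j ∈ Finset.range (k+1), (2:ℝ)^k * ((k:ℝ)+1)^2 := by
        refine mul_le_mul_of_nonneg_left (Finset.sum_le_sum hj) (by positivity)
    _ = ((k:ℝ)+1) * ((k+1 : ℕ) * ((2:ℝ)^k * ((k:ℝ)+1)^2)) := by
        rw [Finset.sum_const, Finset.card_range]; simp
    _ ≤ (2:ℝ)^k * ((k:ℝ)+1)^4 := by push_cast; ring_nf; nlinarith [sq_nonneg ((k:ℝ)+1), pow_pos (by norm_num : (0:ℝ) < 2) k]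

lemma ae_QQ_bound (δ : ℝ) (hδ : 0 < δ) :
    ∀ᵐ θ ∂(volume.restrict (Set.Icc (0:ℝ) 1)),
      ∀ᶠ k in Filter.atTop, QQ k θ < (2:ℝ)^k * ((k:ℝ)+1) ^ ((5:ℝ)+2*δ) := by
  set μ := volume.restrict (Set.Icc (0:ℝ) 1) with hμ
  set t : ℕ → ℝ := fun k => (2:ℝ)^k * ((k:ℝ)+1) ^ ((5:ℝ)+2*δ) with htdef
  set s : ℕ → Set ℝ := fun k => {θ | t k ≤ QQ k θ} with hsdef
  have hx : ∀ k : ℕ, (0:ℝ) < (k:ℝ)+1 := fun k => by positivity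
  have ht : ∀ k, 0 < t k := fun k => by
    have := Real.rpow_pos_of_pos (hx k) ((5:ℝ)+2*δ)
    simp only [htdef]
    positivity
  set c : ℕ → ℝ := fun k => ((k:ℝ)+1) ^ (-(1+2*δ)) with hcdef
  have hc_nonneg : ∀ k, 0 ≤ c k := fun k => Real.rpow_nonneg (by positivity) _
  have hBt : ∀ k : ℕ, ((2:ℝ)^k * ((k:ℝ)+1)^4) / t k = c k := by
    intro k
    have h2k : ((2:ℝ)^k) ≠ 0 := by positivity
    rw [htdef]
    simp only
    rw [mul_div_mul_left _ _ h2k, ← Real.rpow_natCast ((k:ℝ)+1) 4,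
      ← Real.rpow_sub (hx k), hcdef]
    norm_num
    congr 1
    ring
  have hmeas : ∀ k, (μ (s k)).toReal ≤ c k := by
    intro k
    have hm := mul_meas_ge_le_integral_of_nonneg
      (μ := μ) (f := QQ k)
      (Filter.Eventually.of_forall (QQ_nonneg k)) (integrable_QQ k) (t k)
    have h1 : (μ (s k)).toReal ≤ (∫ θ, QQ k θ ∂μ) / t k := by
      rw [le_div_iff₀ (ht k)]
      calc (μ (s k)).toReal * t k = t k * (μ {θ | t k ≤ QQ k θ}).toReal := by
            rw [mul_comm]
        _ ≤ ∫ θ, QQ k θ ∂μ := hm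
    calc (μ (s k)).toReal ≤ (∫ θ, QQ k θ ∂μ) / t k := h1
      _ ≤ ((2:ℝ)^k * ((k:ℝ)+1)^4) / t k :=
          div_le_div_of_nonneg_right (integral_QQ_le k) (ht k).le
      _ = c k := hBt k
  -- summability of c
  have hsumm : Summable c := by
    have h1 : Summable (fun n : ℕ => ((n:ℝ) ^ ((1:ℝ)+2*δ))⁻¹) :=
      Real.summable_nat_rpow_inv.2 (by linarith)
    have h2 : Summable (fun n : ℕ => ((n:ℝ)) ^ (-((1:ℝ)+2*δ))) := by
      refine h1.congr fun n => ?_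
      rw [Real.rpow_neg (Nat.cast_nonneg n)]
    have h3 := (summable_nat_add_iff 1).2 h2
    refine h3.congr fun k => ?_
    push_cast
    rw [hcdef]
  -- tsum of measures finite
  have htsum : (∑' k, μ (s k)) ≠ ⊤ := by
    have hle : ∀ k, μ (s k) ≤ ENNReal.ofReal (c k) := by
      intro k
      rw [ENNReal.le_ofReal_iff_toReal_le (measure_ne_top μ _) (hc_nonneg k)]
      exact hmeas k
    have : (∑' k, μ (s k)) ≤ ∑' k, ENNReal.ofReal (c k) := ENNReal.tsum_le_tsum hle
    refine ne_top_of_le_ne_top ?_ this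
    rw [← ENNReal.ofReal_tsum_of_nonneg hc_nonneg hsumm]
    exact ENNReal.ofReal_ne_top
  have := MeasureTheory.ae_eventually_notMem htsum
  filter_upwards [this] with θ hθ
  filter_upwards [hθ] with k hk
  exact lt_of_not_ge hk

lemma denom_pos {N : ℕ} (hN : 2 ≤ N) (p : ℝ) :
    0 < (N:ℝ)^((1:ℝ)/2) * Real.log N ^ p := by
  have h1 : (0:ℝ) < (N:ℝ) := by positivity
  have h2 : (0:ℝ) < Real.log N := Real.log_pos (by exact_mod_cast hN)
  have := Real.rpow_pos_of_pos h1 ((1:ℝ)/2)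
  have := Real.rpow_pos_of_pos h2 p
  positivity

lemma pointwise (δ : ℝ) (hδ : 0 < δ) (θ : ℝ)
    (h : ∀ᶠ k in Filter.atTop, QQ k θ < (2:ℝ)^k * ((k:ℝ)+1) ^ ((5:ℝ)+2*δ)) :
    ∃ C : ℝ, ∀ N : ℕ, 2 ≤ N →
      ‖SS θ N‖ ≤ C * (N:ℝ)^((1:ℝ)/2) * Real.log N ^ ((5:ℝ)/2+δ) := by
  obtain ⟨K, hK⟩ := Filter.eventually_atTop.mp h
  have hlog2 : (0:ℝ) < Real.log 2 := Real.log_pos (by norm_num)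
  set c0 : ℝ := 3 / Real.log 2 with hc0
  have hc0pos : 0 < c0 := by positivity
  set C1 : ℝ := Real.sqrt (2 * c0 ^ ((5:ℝ)+2*δ)) with hC1
  have hC1nonneg : 0 ≤ C1 := Real.sqrt_nonneg _
  set C2 : ℝ := ∑ M ∈ Finset.Icc 2 (2^(K+1)),
      ‖SS θ M‖ / ((M:ℝ)^((1:ℝ)/2) * Real.log M ^ ((5:ℝ)/2+δ)) with hC2
  refine ⟨max C1 C2, ?_⟩
  intro N hN
  set dN : ℝ := (N:ℝ)^((1:ℝ)/2) * Real.log N ^ ((5:ℝ)/2+δ) with hdN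
  have hdNpos : 0 < dN := denom_pos hN _
  set k := Nat.log 2 N with hk
  have hk1 : 2^k ≤ N := Nat.pow_log_le_self 2 (by omega)
  have hk2 : N < 2^(k+1) := Nat.lt_pow_succ_log_self (by norm_num) N
  rw [show max C1 C2 * (N:ℝ)^((1:ℝ)/2) * Real.log N ^ ((5:ℝ)/2+δ)
      = max C1 C2 * dN from by rw [hdN]; ring]
  by_cases hcase : K ≤ k+1
  · -- large N
    have hQ := hK (k+1) hcase
    have hchain := chain (k+1) N (le_of_lt hk2) θ
    have hNr : (2:ℝ)^k ≤ (N:ℝ) := by exact_mod_cast hk1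
    have hlogN : Real.log 2 ≤ Real.log N :=
      Real.log_le_log (by norm_num) (by exact_mod_cast hN)
    have hklog : (k:ℝ) * Real.log 2 ≤ Real.log N := by
      calc (k:ℝ) * Real.log 2 = Real.log ((2:ℝ)^k) := by rw [Real.log_pow]
        _ ≤ Real.log N := Real.log_le_log (by positivity) hNr
    have hbase : ((k:ℝ)+1)+1 ≤ c0 * Real.log N := by
      rw [hc0, div_mul_eq_mul_div, le_div_iff₀ hlog2]
      nlinarith
    have h2N : (2:ℝ)^(k+1) ≤ 2*(N:ℝ) := by
      rw [pow_succ]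
      nlinarith
    have hsq : ‖SS θ N‖^2 ≤ (C1 * dN)^2 := by
      have e1 : QQ (k+1) θ < (2:ℝ)^(k+1) * (((k+1):ℕ)+1 : ℝ)^((5:ℝ)+2*δ) := hQ
      have e2 : ((((k+1):ℕ)+1 : ℝ))^((5:ℝ)+2*δ) ≤ (c0 * Real.log N)^((5:ℝ)+2*δ) := by
        refine Real.rpow_le_rpow (by positivity) ?_ (by positivity)
        push_cast
        push_cast at hbase
        linarith
      have e3 : (2:ℝ)^(k+1) * (((k+1):ℕ)+1 : ℝ)^((5:ℝ)+2*δ)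
          ≤ (2*(N:ℝ)) * (c0 * Real.log N)^((5:ℝ)+2*δ) := by
        refine mul_le_mul h2N e2 (by positivity) (by positivity)
      have e4 : (2*(N:ℝ)) * (c0 * Real.log N)^((5:ℝ)+2*δ) = (C1 * dN)^2 := by
        rw [hC1, hdN]
        rw [mul_pow, Real.sq_sqrt (by positivity), mul_pow]
        rw [Real.mul_rpow hc0pos.le (Real.log_nonneg (by
          have : (1:ℝ) ≤ (N:ℝ) := by exact_mod_cast (by omega : 1 ≤ N)
          exact_mod_cast this))]
        rw [← Real.rpow_natCast ((N:ℝ)^((1:ℝ)/2)) 2, ← Real.rpow_mul (by positivity)]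
        rw [← Real.rpow_natCast (Real.log N ^ ((5:ℝ)/2+δ)) 2,
          ← Real.rpow_mul (Real.log_nonneg (by
            have : (1:ℝ) ≤ (N:ℝ) := by exact_mod_cast (by omega : 1 ≤ N)
            exact_mod_cast this))]
        norm_num
        rw [show ((5:ℝ)/2+δ)*2 = (5:ℝ)+2*δ by ring]
        ring
      calc ‖SS θ N‖^2 ≤ QQ (k+1) θ := hchain
        _ ≤ (2*(N:ℝ)) * (c0 * Real.log N)^((5:ℝ)+2*δ) := le_trans (le_of_lt e1) e3
        _ = (C1 * dN)^2 := e4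
    have : ‖SS θ N‖ ≤ C1 * dN := by
      have h1 := Real.sqrt_le_sqrt hsq
      rwa [Real.sqrt_sq (norm_nonneg _), Real.sqrt_sq (by positivity)] at h1
    calc ‖SS θ N‖ ≤ C1 * dN := this
      _ ≤ max C1 C2 * dN := by
          refine mul_le_mul_of_nonneg_right (le_max_left _ _) hdNpos.le
  · -- small N
    have hNle : N ≤ 2^(K+1) := by
      have : 2^(k+1) ≤ 2^(K+1) := Nat.pow_le_pow_right (by norm_num) (by omega)
      omega
    have hmem : N ∈ Finset.Icc 2 (2^(K+1)) := Finset.mem_Icc.mpr ⟨hN, hNle⟩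
    have hterm : ‖SS θ N‖ / dN ≤ C2 := by
      rw [hC2]
      refine Finset.single_le_sum (f := fun M => ‖SS θ M‖ / ((M:ℝ)^((1:ℝ)/2) * Real.log M ^ ((5:ℝ)/2+δ)))
        (fun M hM => ?_) hmem
      have := denom_pos (Finset.mem_Icc.mp hM).1 ((5:ℝ)/2+δ)
      positivity
    calc ‖SS θ N‖ = (‖SS θ N‖ / dN) * dN := by field_simp
      _ ≤ C2 * dN := mul_le_mul_of_nonneg_right hterm hdNpos.le
      _ ≤ max C1 C2 * dN := mul_le_mul_of_nonneg_right (le_max_right _ _) hdNpos.le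

lemma sum_eq_SS (θ : ℝ) (N : ℕ) (hN : 2 ≤ N) :
    ∑ n ∈ Finset.Icc 2 N,
        ((ArithmeticFunction.vonMangoldt n : ℝ) : ℂ) *
          Complex.exp (2 * Real.pi * Complex.I * θ * n) = SS θ N := by
  have h1 : Finset.Icc 2 N = Finset.Ioc 1 N := by
    rw [← Finset.Icc_add_one_left_eq_Ioc]; rfl
  have h2 := Finset.sum_Ioc_consecutive
    (f := fun n => ((ArithmeticFunction.vonMangoldt n : ℝ) : ℂ) * ee θ n)
    (by norm_num : (0:ℕ) ≤ 1) (by omega : (1:ℕ) ≤ N)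
  have h3 : ∑ n ∈ Finset.Ioc 0 1,
      ((ArithmeticFunction.vonMangoldt n : ℝ) : ℂ) * ee θ n = 0 := by
    have : Finset.Ioc (0:ℕ) 1 = {1} := rfl
    rw [this]
    simp [ArithmeticFunction.vonMangoldt_apply_one]
  rw [h1, SS]
  rw [← h2, h3, zero_add]
  rfl

/-- For almost every `θ ∈ [0,1]`: for every `ε > 0` there exists `C` such that
`|∑_{n=2}^N Λ(n) e^{2πiθn}| ≤ C · N^{1/2} (log N)^{5/2+ε}` for all `N ≥ 2`. -/
theorem stmt_5 :
    ∀ᵐ θ : ℝ ∂(volume.restrict (Set.Icc (0:ℝ) 1)),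
      ∀ ε : ℝ, 0 < ε → ∃ C : ℝ, ∀ N : ℕ, 2 ≤ N →
        ‖∑ n ∈ Finset.Icc 2 N,
          ((ArithmeticFunction.vonMangoldt n : ℝ) : ℂ) *
            Complex.exp (2 * Real.pi * Complex.I * θ * n)‖ ≤
          C * (N : ℝ) ^ ((1:ℝ)/2) * Real.log N ^ ((5:ℝ)/2 + ε) := by
  have key : ∀ᵐ θ ∂(volume.restrict (Set.Icc (0:ℝ) 1)),
      ∀ m : ℕ, ∃ C : ℝ, ∀ N : ℕ, 2 ≤ N →
        ‖SS θ N‖ ≤ C * (N:ℝ)^((1:ℝ)/2) * Real.log N ^ ((5:ℝ)/2 + 1/(m+1)) := by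
    rw [MeasureTheory.ae_all_iff]
    intro m
    have hpos : (0:ℝ) < 1/(m+1) := by positivity
    filter_upwards [ae_QQ_bound (1/(m+1)) hpos] with θ hθ
    exact pointwise _ hpos θ hθ
  filter_upwards [key] with θ hθ
  intro ε hε
  obtain ⟨m, hm⟩ := exists_nat_one_div_lt hε
  obtain ⟨C, hC⟩ := hθ m
  have hd2 : (0:ℝ) < (2:ℝ)^((1:ℝ)/2) * Real.log 2 ^ ((5:ℝ)/2+ε) := by
    have := denom_pos (le_refl 2) ((5:ℝ)/2+ε)
    simpa using this
  set C' : ℝ := max (max C 0) (‖SS θ 2‖ / ((2:ℝ)^((1:ℝ)/2) * Real.log 2 ^ ((5:ℝ)/2+ε))) with hC'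
  refine ⟨C', ?_⟩
  intro N hN
  rw [sum_eq_SS θ N hN]
  by_cases h3 : 3 ≤ N
  · have hlogN1 : (1:ℝ) ≤ Real.log N := by
      have he : Real.exp 1 ≤ (N:ℝ) := by
        have h9 := Real.exp_one_lt_d9
        have : (3:ℝ) ≤ (N:ℝ) := by exact_mod_cast h3
        linarith
      calc (1:ℝ) = Real.log (Real.exp 1) := by rw [Real.log_exp]
        _ ≤ Real.log N := Real.log_le_log (Real.exp_pos 1) he
    have hexp : Real.log N ^ ((5:ℝ)/2 + 1/((m:ℝ)+1)) ≤ Real.log N ^ ((5:ℝ)/2 + ε) := by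
      refine Real.rpow_le_rpow_of_exponent_le hlogN1 ?_
      have : 1/((m:ℝ)+1) ≤ ε := by
        push_cast at hm ⊢
        linarith
      linarith
    calc ‖SS θ N‖ ≤ C * (N:ℝ)^((1:ℝ)/2) * Real.log N ^ ((5:ℝ)/2 + 1/((m:ℝ)+1)) := by
          have := hC N hN
          push_cast at this ⊢
          exact this
      _ ≤ C' * (N:ℝ)^((1:ℝ)/2) * Real.log N ^ ((5:ℝ)/2 + ε) := by
          have hX : (0:ℝ) ≤ (N:ℝ)^((1:ℝ)/2) := by positivity
          have hCC : C ≤ C' := le_trans (le_max_left C 0) (le_max_left _ _)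
          have hC'0 : 0 ≤ C' := le_trans (le_max_right C 0) (le_max_left _ _)
          have hY : (0:ℝ) ≤ Real.log N ^ ((5:ℝ)/2 + 1/((m:ℝ)+1)) :=
            Real.rpow_nonneg (Real.log_nonneg (by exact_mod_cast (by omega : 1 ≤ N))) _
          refine mul_le_mul ?_ hexp hY (by positivity)
          exact mul_le_mul_of_nonneg_right hCC hX
  · have hN2 : N = 2 := by omega
    subst hN2
    have h1 : ‖SS θ 2‖ = (‖SS θ 2‖ / ((2:ℝ)^((1:ℝ)/2) * Real.log 2 ^ ((5:ℝ)/2+ε))) *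
        ((2:ℝ)^((1:ℝ)/2) * Real.log 2 ^ ((5:ℝ)/2+ε)) := by
      field_simp
    rw [h1]
    have h2 : ‖SS θ 2‖ / ((2:ℝ)^((1:ℝ)/2) * Real.log 2 ^ ((5:ℝ)/2+ε)) ≤ C' :=
      le_max_right _ _
    calc _ ≤ C' * ((2:ℝ)^((1:ℝ)/2) * Real.log 2 ^ ((5:ℝ)/2+ε)) :=
          mul_le_mul_of_nonneg_right h2 hd2.le
      _ = C' * ((2:ℕ):ℝ)^((1:ℝ)/2) * Real.log ((2:ℕ):ℝ) ^ ((5:ℝ)/2+ε) := by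
          push_cast; ring
end

section
/- If g : (1/2, ∞) × ℝ → ℂ is analytic on Re s > 1/2 and f is analytic and non-vanishing on Re s > 1 with f'/f = −g there, then f extends to an analytic, non-vanishing function on Re s > 1/2. -/
open Complex Set intervalIntegral Metric

/-- The primitive of `g` on the half-plane, integrating horizontally from `2`
along the real axis, then vertically. -/
noncomputable def primG (g : ℂ → ℂ) (z : ℂ) : ℂ :=
  (∫ x : ℝ in (2:ℝ)..z.re, g x) + I * ∫ y : ℝ in (0:ℝ)..z.im, g (z.re + y * I)

lemma complexAbs_le_of_le {a b : ℂ} (h1 : |a.re| ≤ |b.re|) (h2 : |a.im| ≤ |b.im|) :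
    ‖a‖ ≤ ‖b‖ := by
  rw [Complex.norm_def, Complex.norm_def, normSq_apply, normSq_apply]
  apply Real.sqrt_le_sqrt
  have e1 := mul_self_le_mul_self (abs_nonneg a.re) h1
  have e2 := mul_self_le_mul_self (abs_nonneg a.im) h2
  rw [abs_mul_abs_self, abs_mul_abs_self] at e1 e2
  linarith

section

variable {g : ℂ → ℂ}

lemma cont_vert (hc : ∀ z : ℂ, 1/2 < z.re → ContinuousAt g z) (b : ℝ) (hb : 1/2 < b) :
    Continuous fun y : ℝ => g (b + y * I) := by
  rw [continuous_iff_continuousAt]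
  intro y
  refine (hc _ ?_).comp (by fun_prop)
  simp
  linarith

lemma intble_horiz (hc : ∀ z : ℂ, 1/2 < z.re → ContinuousAt g z) {a b : ℝ} (c : ℝ)
    (ha : 1/2 < a) (hb : 1/2 < b) :
    IntervalIntegrable (fun x : ℝ => g (x + c * I)) MeasureTheory.volume a b := by
  refine ContinuousOn.intervalIntegrable ?_
  intro x hx
  have hx2 : 1/2 < x := by
    rcases Set.mem_uIcc.1 hx with ⟨h, _⟩ | ⟨h, _⟩ <;> linarith
  refine ((hc _ ?_).comp (by fun_prop)).continuousWithinAt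
  simp
  linarith

lemma intble_real (hc : ∀ z : ℂ, 1/2 < z.re → ContinuousAt g z) {a b : ℝ}
    (ha : 1/2 < a) (hb : 1/2 < b) :
    IntervalIntegrable (fun x : ℝ => g x) MeasureTheory.volume a b := by
  refine ContinuousOn.intervalIntegrable ?_
  intro x hx
  have hx2 : 1/2 < x := by
    rcases Set.mem_uIcc.1 hx with ⟨h, _⟩ | ⟨h, _⟩ <;> linarith
  refine ((hc _ ?_).comp (by fun_prop)).continuousWithinAt
  simp
  linarith

lemma primG_diff (hd : ∀ z : ℂ, 1/2 < z.re → DifferentiableAt ℂ g z)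
    {z w : ℂ} (hz : 1/2 < z.re) (hw : 1/2 < w.re) :
    primG g w - primG g z =
      (∫ x : ℝ in z.re..w.re, g (x + z.im * I)) +
        I * ∫ y : ℝ in z.im..w.im, g (w.re + y * I) := by
  have hc : ∀ z : ℂ, 1/2 < z.re → ContinuousAt g z := fun z hz => (hd z hz).continuousAt
  have rect := Complex.integral_boundary_rect_eq_zero_of_differentiableOn g
      (z.re : ℂ) (w.re + z.im * I) ?_
  · simp only [Complex.ofReal_re, Complex.ofReal_im, Complex.add_re, Complex.add_im,
      Complex.mul_re, Complex.mul_im, Complex.I_re, Complex.I_im, Complex.ofReal_zero,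
      mul_zero, mul_one, zero_mul, sub_zero, zero_add, add_zero, zero_sub, smul_eq_mul,
      Complex.ofReal_zero] at rect
    have s1 : (∫ x : ℝ in (2:ℝ)..z.re, g x) + ∫ x : ℝ in z.re..w.re, g x
        = ∫ x : ℝ in (2:ℝ)..w.re, g x :=
      integral_add_adjacent_intervals (intble_real hc (by norm_num) hz)
        (intble_real hc hz hw)
    have s2 : (∫ y : ℝ in (0:ℝ)..z.im, g (w.re + y * I))
          + ∫ y : ℝ in z.im..w.im, g (w.re + y * I)
        = ∫ y : ℝ in (0:ℝ)..w.im, g (w.re + y * I) :=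
      integral_add_adjacent_intervals
        ((cont_vert hc w.re hw).intervalIntegrable _ _)
        ((cont_vert hc w.re hw).intervalIntegrable _ _)
    unfold primG
    rw [← s1, ← s2]
    linear_combination rect
  · intro u hu
    refine (hd u ?_).differentiableWithinAt
    have hu1 := hu.1
    simp only [Complex.ofReal_re, Complex.add_re, Complex.mul_re, Complex.I_re,
      Complex.I_im, Complex.ofReal_im, mul_zero, mul_one, zero_mul, sub_zero, add_zero] at hu1
    rcases Set.mem_uIcc.1 hu1 with ⟨h, _⟩ | ⟨h, _⟩ <;> linarith

lemma primG_hasDerivAt (hd : ∀ z : ℂ, 1/2 < z.re → DifferentiableAt ℂ g z)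
    {z : ℂ} (hz : 1/2 < z.re) :
    HasDerivAt (primG g) (g z) z := by
  have hc : ∀ z : ℂ, 1/2 < z.re → ContinuousAt g z := fun z hz => (hd z hz).continuousAt
  rw [hasDerivAt_iff_isLittleO, Asymptotics.isLittleO_iff]
  intro c hc0
  obtain ⟨δ₁, hδ₁, hball⟩ := Metric.continuousAt_iff.1 (hc z hz) (c/2) (by linarith)
  have hδ : 0 < min δ₁ (z.re - 1/2) := lt_min hδ₁ (by linarith)
  filter_upwards [Metric.ball_mem_nhds z hδ] with w hwball
  have hwz : ‖w - z‖ < min δ₁ (z.re - 1/2) := by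
    simpa [Complex.dist_eq] using mem_ball.1 hwball
  have hre : |w.re - z.re| ≤ ‖w - z‖ := by
    simpa using Complex.abs_re_le_norm (w - z)
  have him : |w.im - z.im| ≤ ‖w - z‖ := by
    simpa using Complex.abs_im_le_norm (w - z)
  have hw : 1/2 < w.re := by
    have h1 := abs_lt.1 (lt_of_le_of_lt hre (lt_of_lt_of_le hwz (min_le_right _ _)))
    linarith [h1.1]
  have hnear : ∀ u : ℂ, |u.re - z.re| ≤ |w.re - z.re| → |u.im - z.im| ≤ |w.im - z.im| →
      ‖g u - g z‖ ≤ c/2 := by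
    intro u h1 h2
    have : ‖u - z‖ ≤ ‖w - z‖ := by
      apply complexAbs_le_of_le <;> simp [Complex.sub_re, Complex.sub_im, h1, h2]
    have hd' : dist u z < δ₁ := by
      rw [Complex.dist_eq]
      exact lt_of_le_of_lt this (lt_of_lt_of_le hwz (min_le_left _ _))
    have := hball hd'
    rw [dist_eq_norm] at this
    linarith
  rw [primG_diff hd hz hw]
  have i1 : IntervalIntegrable (fun x : ℝ => g (x + z.im * I))
      MeasureTheory.volume z.re w.re := intble_horiz hc _ hz hw
  have i2 : IntervalIntegrable (fun y : ℝ => g (w.re + y * I))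
      MeasureTheory.volume z.im w.im := (cont_vert hc w.re hw).intervalIntegrable _ _
  have e1 : (w - z) • g z = (∫ _ : ℝ in z.re..w.re, g z) + I * ∫ _ : ℝ in z.im..w.im, g z := by
    rw [intervalIntegral.integral_const, intervalIntegral.integral_const]
    have hwz' : w - z = ((w.re - z.re : ℝ) : ℂ) + ((w.im - z.im : ℝ) : ℂ) * I := by
      apply Complex.ext <;> simp
    rw [smul_eq_mul, Complex.real_smul, Complex.real_smul, hwz']
    ring
  rw [e1]
  have key : (∫ x : ℝ in z.re..w.re, g (x + z.im * I)) +
        I * (∫ y : ℝ in z.im..w.im, g (w.re + y * I)) -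
        ((∫ _ : ℝ in z.re..w.re, g z) + I * ∫ _ : ℝ in z.im..w.im, g z)
      = (∫ x : ℝ in z.re..w.re, (g (x + z.im * I) - g z)) +
        I * ∫ y : ℝ in z.im..w.im, (g (w.re + y * I) - g z) := by
    rw [intervalIntegral.integral_sub i1 (intervalIntegrable_const),
      intervalIntegral.integral_sub i2 (intervalIntegrable_const)]
    ring
  rw [key]
  have b1 : ‖∫ x : ℝ in z.re..w.re, (g (x + z.im * I) - g z)‖ ≤ c/2 * |w.re - z.re| :=
    intervalIntegral.norm_integral_le_of_norm_le_const (by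
      intro x hx
      have hxm : |x - z.re| ≤ |w.re - z.re| := by
        rcases Set.mem_uIoc.1 hx with ⟨h1, h2⟩ | ⟨h1, h2⟩ <;>
          [skip; skip] <;> rw [abs_le] <;> constructor <;> cases abs_le.1 (le_refl |w.re - z.re|) <;>
          nlinarith [abs_nonneg (w.re - z.re), le_abs_self (w.re - z.re),
            neg_abs_le (w.re - z.re)]
      refine hnear _ ?_ ?_ <;> simp [Complex.add_re, Complex.add_im, hxm])
  have b2 : ‖∫ y : ℝ in z.im..w.im, (g (w.re + y * I) - g z)‖ ≤ c/2 * |w.im - z.im| :=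
    intervalIntegral.norm_integral_le_of_norm_le_const (by
      intro y hy
      have hym : |y - z.im| ≤ |w.im - z.im| := by
        rcases Set.mem_uIoc.1 hy with ⟨h1, h2⟩ | ⟨h1, h2⟩ <;> rw [abs_le] <;> constructor <;>
          nlinarith [le_abs_self (w.im - z.im), neg_abs_le (w.im - z.im)]
      refine hnear _ ?_ ?_ <;> simp [Complex.add_re, Complex.add_im, hym])
  calc ‖(∫ x : ℝ in z.re..w.re, (g (x + z.im * I) - g z)) +
        I * ∫ y : ℝ in z.im..w.im, (g (w.re + y * I) - g z)‖
      ≤ ‖∫ x : ℝ in z.re..w.re, (g (x + z.im * I) - g z)‖ +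
        ‖I * ∫ y : ℝ in z.im..w.im, (g (w.re + y * I) - g z)‖ := norm_add_le _ _
    _ = ‖∫ x : ℝ in z.re..w.re, (g (x + z.im * I) - g z)‖ +
        ‖∫ y : ℝ in z.im..w.im, (g (w.re + y * I) - g z)‖ := by
        rw [norm_mul, Complex.norm_I, one_mul]
    _ ≤ c/2 * |w.re - z.re| + c/2 * |w.im - z.im| := add_le_add b1 b2
    _ ≤ c/2 * ‖w - z‖ + c/2 * ‖w - z‖ := by
        have := hre; have := him
        gcongr <;> assumption
    _ = c * ‖w - z‖ := by ring

end

/-- If `f` is analytic and non-vanishing on `Re s > 1` with `f'/f = −g` there,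
and `g` is analytic on `Re s > 1/2`, then `f` extends to an analytic,
non-vanishing function on `Re s > 1/2`. -/
theorem stmt_16 (f g : ℂ → ℂ)
    (hf : AnalyticOn ℂ f {s : ℂ | 1 < s.re})
    (hfne : ∀ s : ℂ, 1 < s.re → f s ≠ 0)
    (hg : AnalyticOn ℂ g {s : ℂ | 1 / 2 < s.re})
    (hlog : ∀ s : ℂ, 1 < s.re → HasDerivAt f (-(g s) * f s) s) :
    ∃ F : ℂ → ℂ, AnalyticOn ℂ F {s : ℂ | 1 / 2 < s.re} ∧
      (∀ s : ℂ, 1 / 2 < s.re → F s ≠ 0) ∧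
      ∀ s : ℂ, 1 < s.re → F s = f s := by
  have hΩ : IsOpen {s : ℂ | 1/2 < s.re} := isOpen_lt continuous_const Complex.continuous_re
  have hg' : AnalyticOnNhd ℂ g {s : ℂ | 1/2 < s.re} := hΩ.analyticOn_iff_analyticOnNhd.1 hg
  have hd : ∀ z : ℂ, 1/2 < z.re → DifferentiableAt ℂ g z := fun z hz =>
    (hg' z hz).differentiableAt
  have hG : ∀ z : ℂ, 1/2 < z.re → HasDerivAt (primG g) (g z) z := fun z hz =>
    primG_hasDerivAt hd hz
  have h2re : ((2 : ℂ)).re = 2 := by norm_num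
  have h2 : (1 : ℝ) < (2 : ℂ).re := by rw [h2re]; norm_num
  refine ⟨fun s => f 2 * Complex.exp (primG g 2 - primG g s), ?_, ?_, ?_⟩
  · apply (DifferentiableOn.analyticOnNhd ?_ hΩ).analyticOn
    intro s hs
    exact (((differentiableAt_const _).sub (hG s hs).differentiableAt).cexp.const_mul
      _).differentiableWithinAt
  · intro s hs
    exact mul_ne_zero (hfne 2 h2) (Complex.exp_ne_zero _)
  · intro s hs
    have hcv : Convex ℝ {s : ℂ | 1 < s.re} := convex_halfSpace_re_gt 1
    have hder : ∀ u ∈ {s : ℂ | 1 < s.re},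
        HasDerivWithinAt (fun s => f s * Complex.exp (primG g s)) 0 {s : ℂ | 1 < s.re} u := by
      intro u hu
      have hu' : (1:ℝ) < u.re := hu
      have h1 : 1/2 < u.re := by linarith
      have hmul := (hlog u hu').mul ((hG u h1).cexp)
      have : (-(g u) * f u) * Complex.exp (primG g u)
          + f u * (Complex.exp (primG g u) * g u) = 0 := by ring
      rw [this] at hmul
      exact hmul.hasDerivWithinAt
    have hkey : ‖(fun s => f s * Complex.exp (primG g s)) s
        - (fun s => f s * Complex.exp (primG g s)) 2‖ ≤ 0 * ‖s - (2:ℂ)‖ :=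
      hcv.norm_image_sub_le_of_norm_hasDerivWithin_le (f' := fun _ => 0) hder
        (fun x _ => by simp) (by exact h2) hs
    rw [zero_mul] at hkey
    have heq : f s * Complex.exp (primG g s) = f 2 * Complex.exp (primG g 2) := by
      have := norm_le_zero_iff.1 hkey
      have := sub_eq_zero.1 this
      simpa using this
    have hene := Complex.exp_ne_zero (primG g s)
    show f 2 * Complex.exp (primG g 2 - primG g s) = f s
    rw [Complex.exp_sub, ← mul_div_assoc, div_eq_iff hene, heq]
end
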